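/- Let A be an invertible n×n matrix with A^N = I for some N ∈ ℕ, 0 < α < n, and p : ℝ^n → [1, ∞) continuous with 1 < p₋ ≤ p₊ < n/α. If the operator T_A f(x) = ∫ |x − Ay|^{−(n−α)} f(y) dy is bounded from L^{p(·)}(ℝ^n) to L^{q(·)}(ℝ^n), where 1/q(·) = 1/p(·) − α/n, then p(Ay) = p(y) for all y ∈ ℝ^n. -/

import Mathlib

open MeasureTheory Metric ENNReal

/-- The modular `∫ (|f(x)|/λ)^{p(x)} dx` of the variable exponent space. -/
noncomputable def modular {n : ℕ} (p : EuclideanSpace ℝ (Fin n) → ℝ)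
    (f : EuclideanSpace ℝ (Fin n) → ℝ≥0∞) (lam : ℝ≥0∞) : ℝ≥0∞ :=
  ∫⁻ x, (f x / lam) ^ (p x)

/-- Membership in the variable exponent Lebesgue space `L^{p(·)}`. -/
def MemVarLp {n : ℕ} (p : EuclideanSpace ℝ (Fin n) → ℝ)
    (f : EuclideanSpace ℝ (Fin n) → ℝ≥0∞) : Prop :=
  ∃ lam : ℝ≥0∞, 0 < lam ∧ lam ≠ ⊤ ∧ modular p f lam < ⊤

/-- The Luxemburg norm of `L^{p(·)}` (valued in `ℝ≥0∞`). -/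
noncomputable def luxNorm {n : ℕ} (p : EuclideanSpace ℝ (Fin n) → ℝ)
    (f : EuclideanSpace ℝ (Fin n) → ℝ≥0∞) : ℝ≥0∞ :=
  sInf {lam : ℝ≥0∞ | 0 < lam ∧ modular p f lam ≤ 1}

/-- The fractional type operator `T_A f(x) = ∫ |x − Ay|^{−(n−α)} f(y) dy`. -/
noncomputable def TA {n : ℕ} (α : ℝ)
    (A : EuclideanSpace ℝ (Fin n) ≃L[ℝ] EuclideanSpace ℝ (Fin n))
    (f : EuclideanSpace ℝ (Fin n) → ℝ) (x : EuclideanSpace ℝ (Fin n)) : ℝ≥0∞ :=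
  ∫⁻ y, ENNReal.ofReal (‖x - A y‖ ^ (-((n : ℝ) - α))) * ENNReal.ofReal |f y|

/-- `|f|` as an `ℝ≥0∞`-valued function. -/
noncomputable def absE {n : ℕ} (f : EuclideanSpace ℝ (Fin n) → ℝ)
    (x : EuclideanSpace ℝ (Fin n)) : ℝ≥0∞ := ENNReal.ofReal |f x|

/-! If `p (A y₀) > p y₀`, test `T_A` on the indicator `f` of a small ball `B_δ` around `y₀`.
Continuity of the exponents gives `‖f‖_{p(·)} ≲ δ^{n/P}` with `P` slightly above `p y₀`, while
`T_A f ≳ δ^α` on the ball of radius `δ` around `A y₀` (there `|x - A y| ≤ (‖A‖ + 1) δ`), so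
`‖T_A f‖_{q(·)} ≳ δ^{α + n/Q}` with `Q` slightly below `q (A y₀)`. Since
`α + n / q (A y₀) = n / p (A y₀) < n / p y₀`, boundedness fails as `δ → 0`. Hence `p ∘ A ≤ p`,
and `A^N = 1` turns the chain `p y = p (A^N y) ≤ ⋯ ≤ p (A y) ≤ p y` into equalities. -/

open Filter Topology

lemma not_eventually_mul_rpow_le {a b c₀ c₁ : ℝ} (hc₀ : 0 < c₀) (hab : a < b) :
    ¬ ∀ᶠ δ in 𝓝[>] (0 : ℝ), c₀ * δ ^ a ≤ c₁ * δ ^ b := by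
  intro h
  have hblowup : ∀ᶠ δ in 𝓝[>] (0 : ℝ), c₁ / c₀ < δ ^ (a - b) :=
    (tendsto_rpow_neg_nhdsGT_zero (sub_neg.2 hab)).eventually_gt_atTop _
  obtain ⟨δ, hle, hlt, hδ⟩ := (h.and (hblowup.and self_mem_nhdsWithin)).exists
  have hδ : 0 < δ := hδ
  rw [div_lt_iff₀ hc₀, Real.rpow_sub hδ, div_mul_eq_mul_div, lt_div_iff₀ (by positivity)] at hlt
  linarith

lemma exists_exponent_gap {n α p₀ q₁ : ℝ} (hp₀ : 0 < p₀) (hq₁ : 0 < q₁)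
    (h : α + n / q₁ < n / p₀) : ∃ P Q, p₀ < P ∧ 0 < Q ∧ Q < q₁ ∧ α + n / Q < n / P := by
  have hcont : ContinuousAt (fun ε : ℝ => α + n / (q₁ - ε) - n / (p₀ + ε)) 0 := by
    fun_prop (disch := simp [hp₀.ne', hq₁.ne'])
  have hgap : ∀ᶠ ε in 𝓝 (0 : ℝ), α + n / (q₁ - ε) - n / (p₀ + ε) < 0 :=
    hcont.eventually (eventually_lt_nhds (by simpa using h))
  have hsmall : ∀ᶠ ε in 𝓝 (0 : ℝ), ε < q₁ := eventually_lt_nhds hq₁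
  obtain ⟨ε, ⟨hε, hεq⟩, hεpos : 0 < ε⟩ :=
    ((hgap.and hsmall).filter_mono nhdsWithin_le_nhds |>.and
      (self_mem_nhdsWithin (s := Set.Ioi 0))).exists
  exact ⟨p₀ + ε, q₁ - ε, by linarith, by linarith, by linarith, by linarith⟩

lemma rpow_le_of_ofReal_le {n : ℕ} {α C K P Q ω δ : ℝ} (hK : 0 < K) (hω : 0 < ω) (hδ : 0 < δ)
    (h : ENNReal.ofReal ((K * δ) ^ (α - n)) * ENNReal.ofReal (δ ^ n * ω) *
        ENNReal.ofReal (δ ^ n * ω) ^ (1 / Q) ≤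
          ENNReal.ofReal C * ENNReal.ofReal (δ ^ n * ω) ^ (1 / P)) :
    K ^ (α - n) * ω ^ (1 + 1 / Q) * δ ^ (α + n / Q) ≤ C * ω ^ (1 / P) * δ ^ (n / P) := by
  have hw : 0 < δ ^ n * ω := by positivity
  rw [ENNReal.ofReal_rpow_of_pos hw, ENNReal.ofReal_rpow_of_pos hw,
    ← ENNReal.ofReal_mul (by positivity), ← ENNReal.ofReal_mul (by positivity),
    ← ENNReal.ofReal_mul' (by positivity), ENNReal.ofReal_le_ofReal_iff'] at h
  have hpow : ∀ s : ℝ, (δ ^ n * ω) ^ s = δ ^ ((n : ℝ) * s) * ω ^ s := fun s => by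
    rw [Real.mul_rpow (by positivity) hω.le, Real.rpow_mul hδ.le, Real.rpow_natCast]
  have hlhs : (K * δ) ^ (α - n) * (δ ^ n * ω) * (δ ^ n * ω) ^ (1 / Q) =
      K ^ (α - n) * ω ^ (1 + 1 / Q) * δ ^ (α + n / Q) := by
    rw [hpow, Real.mul_rpow hK.le hδ.le, Real.rpow_add hω, Real.rpow_one,
      show α + n / Q = (α - n) + n + n * (1 / Q) by ring, Real.rpow_add hδ, Real.rpow_add hδ,
      Real.rpow_natCast]
    ring
  rw [hlhs, hpow, show (n : ℝ) * (1 / P) = n / P by ring] at h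
  rcases h with h | h
  · linarith
  · exact absurd h (not_le.2 (by positivity))

lemma norm_sub_apply_le_of_mem_ball {E : Type*} [NormedAddCommGroup E] [NormedSpace ℝ E]
    (A : E →L[ℝ] E) {x y y₀ : E} {δ : ℝ} (hx : x ∈ ball (A y₀) δ) (hy : y ∈ ball y₀ δ) :
    ‖x - A y‖ ≤ (‖A‖ + 1) * δ :=
  calc ‖x - A y‖ ≤ ‖x - A y₀‖ + ‖A (y₀ - y)‖ := by
        rw [map_sub]; exact norm_sub_le_norm_sub_add_norm_sub _ _ _
    _ ≤ δ + ‖A‖ * δ := by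
        gcongr
        · exact (mem_ball_iff_norm.1 hx).le
        · exact (A.le_opNorm _).trans
            (mul_le_mul_of_nonneg_left (mem_ball_iff_norm'.1 hy).le (norm_nonneg _))
    _ = (‖A‖ + 1) * δ := by ring

lemma apply_eq_of_apply_le_of_iterate_eq {X Y : Type*} [PartialOrder Y] {g : X → X} {p : X → Y}
    {N : ℕ} (hN : 0 < N) (hg : ∀ y, g^[N] y = y) (hle : ∀ y, p (g y) ≤ p y) (y : X) :
    p (g y) = p y := by
  have hiter : ∀ m z, p (g^[m] z) ≤ p z := by
    intro m
    induction m with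
    | zero => simp
    | succ m ih =>
      intro z
      rw [Function.iterate_succ_apply']
      exact (hle _).trans (ih z)
  refine le_antisymm (hle y) ?_
  calc p y = p (g^[N - 1] (g y)) := by
        rw [← Function.iterate_succ_apply, Nat.succ_eq_add_one, Nat.sub_add_cancel hN, hg]
    _ ≤ p (g y) := hiter _ _

lemma continuous_of_one_div_eq_sub {X : Type*} [TopologicalSpace X] {p q : X → ℝ} {c : ℝ}
    (hpc : Continuous p) (hp : ∀ x, p x ≠ 0) (hq : ∀ x, 1 / q x = 1 / p x - c)
    (hne : ∀ x, 1 / p x - c ≠ 0) : Continuous q := by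
  have hq' : q = fun x => (1 / p x - c)⁻¹ := funext fun x => by rw [← hq, one_div, inv_inv]
  rw [hq']
  exact ((continuous_const.div hpc hp).sub continuous_const).inv₀ hne

section VariableExponent

variable {n : ℕ}

lemma modular_indicator_one {p : EuclideanSpace ℝ (Fin n) → ℝ} (hp : ∀ x, 0 < p x)
    {B : Set (EuclideanSpace ℝ (Fin n))} (hB : MeasurableSet B) (lam : ℝ≥0∞) :
    modular p (B.indicator 1) lam = ∫⁻ x in B, lam⁻¹ ^ p x := by
  rw [modular, ← lintegral_indicator hB]
  congr 1
  funext x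
  by_cases hx : x ∈ B
  · simp [hx]
  · simp [hx, ENNReal.zero_rpow_of_pos (hp x)]

lemma memVarLp_indicator_one {p : EuclideanSpace ℝ (Fin n) → ℝ} (hp : ∀ x, 0 < p x)
    {B : Set (EuclideanSpace ℝ (Fin n))} (hB : MeasurableSet B) (hBfin : volume B ≠ ⊤) :
    MemVarLp p (B.indicator 1) :=
  ⟨1, one_pos, one_ne_top, by simpa [modular_indicator_one hp hB] using hBfin.lt_top⟩

lemma luxNorm_indicator_one_le {p : EuclideanSpace ℝ (Fin n) → ℝ} (hp : ∀ x, 0 < p x)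
    {B : Set (EuclideanSpace ℝ (Fin n))} (hB : MeasurableSet B) {P : ℝ} (hP : 0 < P)
    (hpP : ∀ x ∈ B, p x ≤ P) (h0 : volume B ≠ 0) (h1 : volume B ≤ 1) :
    luxNorm p (B.indicator 1) ≤ volume B ^ (1 / P) := by
  set v := volume B
  have hvtop : v ≠ ⊤ := ne_top_of_le_ne_top one_ne_top h1
  refine sInf_le ⟨ENNReal.rpow_pos (pos_iff_ne_zero.2 h0) hvtop, ?_⟩
  have hone : 1 ≤ (v ^ (1 / P))⁻¹ :=
    ENNReal.one_le_inv.2 (ENNReal.rpow_le_one h1 (by positivity))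
  calc modular p (B.indicator 1) (v ^ (1 / P)) = ∫⁻ x in B, (v ^ (1 / P))⁻¹ ^ p x :=
        modular_indicator_one hp hB _
    _ ≤ ∫⁻ _ in B, (v ^ (1 / P))⁻¹ ^ P :=
        setLIntegral_mono' hB fun x hx => ENNReal.rpow_le_rpow_of_exponent_le hone (hpP x hx)
    _ = v⁻¹ * v := by
        rw [setLIntegral_const, ENNReal.inv_rpow, ← ENNReal.rpow_mul, one_div_mul_cancel hP.ne',
          ENNReal.rpow_one]
    _ = 1 := ENNReal.inv_mul_cancel h0 hvtop

lemma mul_volume_rpow_le_luxNorm {q : EuclideanSpace ℝ (Fin n) → ℝ}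
    {g : EuclideanSpace ℝ (Fin n) → ℝ≥0∞} {S : Set (EuclideanSpace ℝ (Fin n))}
    (hS : MeasurableSet S) {c : ℝ≥0∞} {Q : ℝ} (hQ : 0 < Q) (hQq : ∀ x ∈ S, Q ≤ q x)
    (hcg : ∀ x ∈ S, c ≤ g x) (h1 : volume S ≤ 1) :
    c * volume S ^ (1 / Q) ≤ luxNorm q g := by
  set v := volume S
  refine le_sInf fun lam ⟨hlam0, hmod⟩ => ?_
  rcases le_or_gt c lam with hcl | hcl
  · calc c * v ^ (1 / Q) ≤ lam * 1 := mul_le_mul' hcl (ENNReal.rpow_le_one h1 (by positivity))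
      _ = lam := mul_one lam
  have hlamtop : lam ≠ ⊤ := hcl.ne_top
  have hone : 1 ≤ c / lam := by
    rw [ENNReal.le_div_iff_mul_le (Or.inl hlam0.ne') (Or.inl hlamtop), one_mul]
    exact hcl.le
  have hmass : v * (c / lam) ^ Q ≤ 1 :=
    calc v * (c / lam) ^ Q = ∫⁻ _ in S, (c / lam) ^ Q := by rw [setLIntegral_const, mul_comm]
      _ ≤ ∫⁻ x in S, (g x / lam) ^ q x := setLIntegral_mono' hS fun x hx =>
          (ENNReal.rpow_le_rpow_of_exponent_le hone (hQq x hx)).trans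
            (ENNReal.rpow_le_rpow (ENNReal.div_le_div_right (hcg x hx) lam)
              (hQ.le.trans (hQq x hx)))
      _ ≤ 1 := (setLIntegral_le_lintegral _ _).trans hmod
  have hroot : v ^ (1 / Q) * (c / lam) ≤ 1 := by
    have := ENNReal.rpow_le_rpow hmass (by positivity : 0 ≤ 1 / Q)
    rwa [ENNReal.one_rpow, ENNReal.mul_rpow_of_nonneg _ _ (by positivity), ← ENNReal.rpow_mul,
      mul_one_div_cancel hQ.ne', ENNReal.rpow_one] at this
  calc c * v ^ (1 / Q) = lam * (v ^ (1 / Q) * (c / lam)) := by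
        rw [mul_left_comm, ENNReal.mul_div_cancel hlam0.ne' hlamtop, mul_comm]
    _ ≤ lam := mul_le_of_le_one_right' hroot

lemma absE_indicator_one (B : Set (EuclideanSpace ℝ (Fin n))) :
    absE (B.indicator 1) = B.indicator 1 := by
  funext x
  by_cases hx : x ∈ B <;> simp [absE, hx]

lemma TA_indicator_one (α : ℝ) (A : EuclideanSpace ℝ (Fin n) ≃L[ℝ] EuclideanSpace ℝ (Fin n))
    {B : Set (EuclideanSpace ℝ (Fin n))} (hB : MeasurableSet B) (x : EuclideanSpace ℝ (Fin n)) :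
    TA α A (B.indicator 1) x = ∫⁻ y in B, ENNReal.ofReal (‖x - A y‖ ^ (-((n : ℝ) - α))) := by
  rw [TA, ← lintegral_indicator hB]
  congr 1
  funext y
  by_cases hy : y ∈ B <;> simp [hy]

lemma ofReal_rpow_mul_volume_le_TA_indicator_one [NeZero n] {α : ℝ} (hαn : α ≤ n)
    (A : EuclideanSpace ℝ (Fin n) ≃L[ℝ] EuclideanSpace ℝ (Fin n))
    {B : Set (EuclideanSpace ℝ (Fin n))} (hB : MeasurableSet B) {x : EuclideanSpace ℝ (Fin n)}
    {R : ℝ} (hR : ∀ y ∈ B, ‖x - A y‖ ≤ R) :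
    ENNReal.ofReal (R ^ (α - n)) * volume B ≤ TA α A (B.indicator 1) x := by
  rw [TA_indicator_one α A hB, ← setLIntegral_const]
  refine setLIntegral_mono_ae' hB ?_
  -- the kernel takes the junk value `0 ^ (α - n)` only at the null point `y = A⁻¹ x`
  filter_upwards [compl_mem_ae_iff.2 (measure_singleton (A.symm x))] with y hy hyB
  have hxy : 0 < ‖x - A y‖ := norm_sub_pos_iff.2 fun h => hy (by simp [h])
  rw [neg_sub]
  exact ENNReal.ofReal_le_ofReal (Real.rpow_le_rpow_of_nonpos hxy (hR y hyB) (by linarith))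

lemma volume_ball_eq_ofReal (x : EuclideanSpace ℝ (Fin n)) {δ : ℝ} (hδ : 0 < δ) :
    volume (ball x δ) =
      ENNReal.ofReal (δ ^ n * (volume (ball (0 : EuclideanSpace ℝ (Fin n)) 1)).toReal) := by
  rw [Measure.addHaar_ball_of_pos volume x hδ, finrank_euclideanSpace_fin,
    ENNReal.ofReal_mul (by positivity), ENNReal.ofReal_toReal measure_ball_lt_top.ne]

end VariableExponent

section Sharpness

variable {n : ℕ} [NeZero n] {α : ℝ} {A : EuclideanSpace ℝ (Fin n) ≃L[ℝ] EuclideanSpace ℝ (Fin n)}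
  {p q : EuclideanSpace ℝ (Fin n) → ℝ} {C : ℝ}

lemma volume_ball_bound_of_TA_bounded (hαn : α ≤ n) (hp : ∀ x, 0 < p x)
    (hbdd : ∀ f, MemVarLp p (absE f) →
      luxNorm q (TA α A f) ≤ ENNReal.ofReal C * luxNorm p (absE f))
    {y₀ : EuclideanSpace ℝ (Fin n)} {P Q δ : ℝ} (hP : 0 < P) (hQ : 0 < Q) (hδ : 0 < δ)
    (hpP : ∀ x ∈ ball y₀ δ, p x ≤ P) (hQq : ∀ x ∈ ball (A y₀) δ, Q ≤ q x)
    (hvol : volume (ball y₀ δ) ≤ 1) :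
    ENNReal.ofReal (((‖A.toContinuousLinearMap‖ + 1) * δ) ^ (α - n)) * volume (ball y₀ δ) *
        volume (ball y₀ δ) ^ (1 / Q) ≤ ENNReal.ofReal C * volume (ball y₀ δ) ^ (1 / P) := by
  set B := ball y₀ δ
  have hvolS : volume (ball (A y₀) δ) = volume B := by
    rw [Measure.addHaar_ball_center volume (A y₀), Measure.addHaar_ball_center volume y₀]
  have hTA : ∀ x ∈ ball (A y₀) δ,
      ENNReal.ofReal (((‖A.toContinuousLinearMap‖ + 1) * δ) ^ (α - n)) * volume B ≤
        TA α A (B.indicator 1) x := fun x hx =>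
    ofReal_rpow_mul_volume_le_TA_indicator_one hαn A measurableSet_ball fun _ hy =>
      norm_sub_apply_le_of_mem_ball A.toContinuousLinearMap hx hy
  have hmem : MemVarLp p (absE (B.indicator 1)) := by
    rw [absE_indicator_one]
    exact memVarLp_indicator_one hp measurableSet_ball measure_ball_lt_top.ne
  calc _ ≤ luxNorm q (TA α A (B.indicator 1)) := by
        simpa only [hvolS] using
          mul_volume_rpow_le_luxNorm measurableSet_ball hQ hQq hTA (hvolS ▸ hvol)
    _ ≤ ENNReal.ofReal C * luxNorm p (B.indicator 1) := by
        simpa only [absE_indicator_one] using hbdd _ hmem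
    _ ≤ _ := by
        gcongr
        exact luxNorm_indicator_one_le hp measurableSet_ball hP hpP
          (measure_ball_pos volume y₀ hδ).ne' hvol

theorem apply_le_of_TA_bounded (hαn : α ≤ n) (hpc : Continuous p) (hqc : Continuous q)
    (hp : ∀ x, 0 < p x) (hq₀ : ∀ x, 0 < q x) (hq : ∀ x, 1 / q x = 1 / p x - α / n)
    (hbdd : ∀ f, MemVarLp p (absE f) →
      luxNorm q (TA α A f) ≤ ENNReal.ofReal C * luxNorm p (absE f))
    (y₀ : EuclideanSpace ℝ (Fin n)) : p (A y₀) ≤ p y₀ := by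
  by_contra! hlt
  have hn : (0 : ℝ) < n := Nat.cast_pos.2 (Nat.pos_of_ne_zero (NeZero.ne n))
  have hgap : α + n / q (A y₀) < n / p y₀ := by
    have hsob : (n : ℝ) / q (A y₀) = n / p (A y₀) - α := by
      rw [div_eq_mul_one_div, hq, mul_sub, mul_div_cancel₀ _ hn.ne', ← div_eq_mul_one_div]
    linarith [div_lt_div_of_pos_left hn (hp y₀) hlt]
  obtain ⟨P, Q, hP, hQ₀, hQ, hPQ⟩ := exists_exponent_gap (hp y₀) (hq₀ (A y₀)) hgap
  have hpP : ∀ᶠ δ in 𝓝 (0 : ℝ), ball y₀ δ ⊆ {x | p x ≤ P} :=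
    eventually_ball_subset (hpc.continuousAt.eventually (eventually_le_nhds hP))
  have hQq : ∀ᶠ δ in 𝓝 (0 : ℝ), ball (A y₀) δ ⊆ {x | Q ≤ q x} :=
    eventually_ball_subset (hqc.continuousAt.eventually (eventually_ge_nhds hQ))
  set ω := (volume (ball (0 : EuclideanSpace ℝ (Fin n)) 1)).toReal
  have hω : 0 < ω := ENNReal.toReal_pos (measure_ball_pos volume 0 one_pos).ne'
    measure_ball_lt_top.ne
  have hsmall : ∀ᶠ δ in 𝓝 (0 : ℝ), δ ^ n * ω ≤ 1 :=
    ((Continuous.tendsto' (by fun_prop) 0 0 (by simp [NeZero.ne n])).eventually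
      (eventually_le_nhds one_pos))
  set K := ‖A.toContinuousLinearMap‖ + 1
  have hbound : ∀ᶠ δ in 𝓝[>] (0 : ℝ),
      K ^ (α - n) * ω ^ (1 + 1 / Q) * δ ^ (α + n / Q) ≤ C * ω ^ (1 / P) * δ ^ (n / P) := by
    filter_upwards [nhdsWithin_le_nhds hpP, nhdsWithin_le_nhds hQq, nhdsWithin_le_nhds hsmall,
      self_mem_nhdsWithin] with δ hδP hδQ hδω (hδ : 0 < δ)
    have hvol := volume_ball_eq_ofReal y₀ hδ
    refine rpow_le_of_ofReal_le (by positivity) hω hδ ?_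
    rw [← hvol]
    exact volume_ball_bound_of_TA_bounded hαn hp hbdd (hp y₀ |>.trans hP) hQ₀ hδ hδP hδQ
      (hvol ▸ ENNReal.ofReal_le_one.2 hδω)
  exact not_eventually_mul_rpow_le (by positivity) hPQ hbound

end Sharpness

/-- if `A^N = I`, `p` continuous, `1 < p₋ ≤ p₊ < n/α` and `T_A` is bounded
from `L^{p(·)}` to `L^{q(·)}`, then `p(Ay) = p(y)` for all `y`. -/
theorem stmt5 {n : ℕ} (α : ℝ) (hα : 0 < α) (hαn : α < n)
    (A : EuclideanSpace ℝ (Fin n) ≃L[ℝ] EuclideanSpace ℝ (Fin n))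
    (N : ℕ) (hN : 0 < N) (hAN : ∀ y, (fun x => A x)^[N] y = y)
    (p q : EuclideanSpace ℝ (Fin n) → ℝ) (hpcont : Continuous p)
    (hpminus : ∃ P : ℝ, 1 < P ∧ ∀ x, P ≤ p x)
    (hpplus : ∃ P : ℝ, (∀ x, p x ≤ P) ∧ P * α < n)
    (hq : ∀ x, 1 / q x = 1 / p x - α / n)
    (hbdd : ∃ C : ℝ, 0 < C ∧ ∀ f : EuclideanSpace ℝ (Fin n) → ℝ,
      MemVarLp p (absE f) →
        MemVarLp q (TA α A f) ∧
          luxNorm q (TA α A f) ≤ ENNReal.ofReal C * luxNorm p (absE f)) :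
    ∀ y, p (A y) = p y := by
  have hn : (0 : ℝ) < n := hα.trans hαn
  have : NeZero n := ⟨by exact_mod_cast hn.ne'⟩
  obtain ⟨pmin, hpmin, hpmin_le⟩ := hpminus
  obtain ⟨pmax, hpmax_ge, hpmax⟩ := hpplus
  obtain ⟨C, -, hC⟩ := hbdd
  have hp : ∀ x, 0 < p x := fun x => by linarith [hpmin_le x]
  have hconj : ∀ x, 0 < 1 / p x - α / n := fun x => by
    rw [sub_pos, div_lt_div_iff₀ hn (hp x)]
    nlinarith [hpmax_ge x]
  have hq₀ : ∀ x, 0 < q x := fun x => one_div_pos.1 (hq x ▸ hconj x)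
  have hqc : Continuous q :=
    continuous_of_one_div_eq_sub hpcont (fun x => (hp x).ne') hq fun x => (hconj x).ne'
  exact apply_eq_of_apply_le_of_iterate_eq hN hAN
    (apply_le_of_TA_bounded hαn.le hpcont hqc hp hq₀ hq fun f hf => (hC f hf).2)
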